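/- For every ε > 0, the domain Ω_ε := {(z,w) ∈ ℂ² : |w| < |z| and |z| > ε} is Kobayashi hyperbolic. -/

import Mathlib

open Metric Set

noncomputable def kob {E : Type*} [NormedAddCommGroup E] [NormedSpace ℂ E]
    (Ω : Set E) (z v : E) : ℝ :=
  sInf {c : ℝ | ∃ r : ℝ, 0 < r ∧ c = 1 / r ∧ ∃ f : ℂ → E,
    DifferentiableOn ℂ f (ball (0 : ℂ) r) ∧ f 0 = z ∧ deriv f 0 = v ∧
    MapsTo f (ball (0 : ℂ) r) Ω}

/-- A set `Ω` is Kobayashi hyperbolic if around every point the Kobayashi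
pseudometric admits a positive lower bound comparable to the norm. -/
def KobayashiHyperbolic {E : Type*} [NormedAddCommGroup E] [NormedSpace ℂ E]
    (Ω : Set E) : Prop :=
  ∀ p ∈ Ω, ∃ U ∈ nhds p, ∃ c > 0, ∀ q ∈ U ∩ Ω, ∀ v : E, c * ‖v‖ ≤ kob Ω q v

/-- Sub-mean value inequality on all closed disks contained in `S`. -/
def SubmeanOn (u : ℂ → ℝ) (S : Set ℂ) : Prop :=
  ∀ c : ℂ, ∀ s : ℝ, 0 < s → closedBall c s ⊆ S →
    u c ≤ (2 * Real.pi)⁻¹ *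
      ∫ θ in (0 : ℝ)..(2 * Real.pi), u (c + (s : ℂ) * Complex.exp ((θ : ℂ) * Complex.I))

def SubharmonicOn (u : ℂ → ℝ) (S : Set ℂ) : Prop :=
  UpperSemicontinuousOn u S ∧ SubmeanOn u S

/-- Plurisubharmonic: upper semicontinuous and subharmonic on every complex line. -/
def PSHOn {E : Type*} [NormedAddCommGroup E] [NormedSpace ℂ E]
    (u : E → ℝ) (Ω : Set E) : Prop :=
  UpperSemicontinuousOn u Ω ∧
    ∀ a b : E, SubmeanOn (fun lam : ℂ => u (a + lam • b)) {lam : ℂ | a + lam • b ∈ Ω}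

/-!
The holomorphic map `(z, w) ↦ (1 / z, w / z)` sends `Ω_ε` into the bounded set
`{|ζ| < 1 / ε} × {|η| < 1}`. Composing an analytic disc `f` of radius `r` through `q` in `Ω_ε`
with it, the Cauchy estimate bounds both `|f₁'(0)| / |q₁|²` and `|f₂'(0) q₁ - q₂ f₁'(0)| / |q₁|²`
by a multiple of `1 / r`. Solving for `f'(0)` gives `ε r ‖f'(0)‖ ≤ 2 (ε + |q₁|)²`, a lower bound
for the Kobayashi pseudometric that is locally uniform in `q`.
-/

theorem norm_deriv_le_of_forall_norm_le {F : Type*} [NormedAddCommGroup F] [NormedSpace ℂ F]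
    {f : ℂ → F} {c : ℂ} {r B : ℝ} (hr : 0 < r) (hf : DifferentiableOn ℂ f (ball c r))
    (hB : ∀ z ∈ ball c r, ‖f z‖ ≤ B) : ‖deriv f c‖ ≤ 2 * B / r := by
  refine Complex.norm_deriv_le_div_of_mapsTo_ball hf (fun z hz => ?_) hr
  rw [mem_closedBall, dist_eq_norm]
  calc ‖f z - f c‖ ≤ ‖f z‖ + ‖f c‖ := norm_sub_le _ _
    _ ≤ 2 * B := by linarith [hB z hz, hB c (mem_ball_self hr)]

theorem HasDerivAt.fst {E F : Type*} [NormedAddCommGroup E] [NormedSpace ℂ E]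
    [NormedAddCommGroup F] [NormedSpace ℂ F] {f : ℂ → E × F} {f' : E × F} {x : ℂ}
    (hf : HasDerivAt f f' x) : HasDerivAt (fun z => (f z).1) f'.1 x := by
  simpa using hf.hasFDerivAt.fst.hasDerivAt

theorem HasDerivAt.snd {E F : Type*} [NormedAddCommGroup E] [NormedSpace ℂ E]
    [NormedAddCommGroup F] [NormedSpace ℂ F] {f : ℂ → E × F} {f' : E × F} {x : ℂ}
    (hf : HasDerivAt f f' x) : HasDerivAt (fun z => (f z).2) f'.2 x := by
  simpa using hf.hasFDerivAt.snd.hasDerivAt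

section Kobayashi

variable {E : Type*} [NormedAddCommGroup E] [NormedSpace ℂ E] {Ω : Set E}

theorem kob_set_nonempty (hΩ : IsOpen Ω) {q : E} (hq : q ∈ Ω) (v : E) :
    {c : ℝ | ∃ r : ℝ, 0 < r ∧ c = 1 / r ∧ ∃ f : ℂ → E,
      DifferentiableOn ℂ f (ball (0 : ℂ) r) ∧ f 0 = q ∧ deriv f 0 = v ∧
      MapsTo f (ball (0 : ℂ) r) Ω}.Nonempty := by
  have hline : Continuous fun z : ℂ => q + z • v := by fun_prop
  obtain ⟨δ, hδ, hball⟩ :=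
    Metric.isOpen_iff.mp (hΩ.preimage hline) 0 (by simpa using hq)
  refine ⟨1 / δ, δ, hδ, rfl, fun z => q + z • v, by fun_prop, by simp, ?_,
    fun z hz => hball hz⟩
  simpa using ((hasDerivAt_id (0 : ℂ)).smul_const v).const_add q |>.deriv

theorem le_kob (hΩ : IsOpen Ω) {q : E} (hq : q ∈ Ω) (v : E) {c : ℝ}
    (h : ∀ r > 0, ∀ f : ℂ → E, DifferentiableOn ℂ f (ball 0 r) → f 0 = q → deriv f 0 = v →
      MapsTo f (ball 0 r) Ω → c ≤ 1 / r) :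
    c ≤ kob Ω q v := by
  refine le_csInf (kob_set_nonempty hΩ hq v) ?_
  rintro _ ⟨r, hr, rfl, f, hf, hf0, hdf, hmaps⟩
  exact h r hr f hf hf0 hdf hmaps

theorem kobayashiHyperbolic_of_lowerSemicontinuousOn {ρ : E → ℝ}
    (hρ : LowerSemicontinuousOn ρ Ω) (hρ_pos : ∀ q ∈ Ω, 0 < ρ q)
    (hkob : ∀ q ∈ Ω, ∀ v : E, ρ q * ‖v‖ ≤ kob Ω q v) :
    KobayashiHyperbolic Ω := by
  intro p hp
  have hnear : ∀ᶠ q in nhdsWithin p Ω, ρ p / 2 < ρ q :=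
    hρ p hp _ (half_lt_self (hρ_pos p hp))
  obtain ⟨U, hU, hpU, hUρ⟩ := mem_nhdsWithin.mp hnear
  refine ⟨U, hU.mem_nhds hpU, ρ p / 2, half_pos (hρ_pos p hp), fun q hq v => ?_⟩
  calc ρ p / 2 * ‖v‖ ≤ ρ q * ‖v‖ := by gcongr; exact (hUρ hq).le
    _ ≤ kob Ω q v := hkob q hq.2 v

end Kobayashi

/-- The domain `Ω_ε`. -/
def truncatedCone (ε : ℝ) : Set (ℂ × ℂ) := {p | ‖p.2‖ < ‖p.1‖ ∧ ε < ‖p.1‖}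

namespace truncatedCone

variable {ε : ℝ}

theorem isOpen : IsOpen (truncatedCone ε) :=
  (isOpen_lt (continuous_norm.comp continuous_snd) (continuous_norm.comp continuous_fst)).inter
    (isOpen_lt continuous_const (continuous_norm.comp continuous_fst))

theorem fst_ne_zero (hε : 0 < ε) {p : ℂ × ℂ} (hp : p ∈ truncatedCone ε) : p.1 ≠ 0 :=
  norm_pos_iff.mp (hε.trans hp.2)

variable {r : ℝ} {f : ℂ → ℂ × ℂ}

variable (hε : 0 < ε) (hr : 0 < r) (hf : DifferentiableOn ℂ f (ball 0 r))
  (hmaps : MapsTo f (ball 0 r) (truncatedCone ε))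
include hε hr hf hmaps

/-- Cauchy estimate for `1 / f₁`, which is bounded by `1 / ε`. -/
theorem norm_deriv_fst_le : ε * r * ‖(deriv f 0).1‖ ≤ 2 * ‖(f 0).1‖ ^ 2 := by
  have hne z (hz : z ∈ ball 0 r) : (f z).1 ≠ 0 := fst_ne_zero hε (hmaps hz)
  have hq : 0 < ‖(f 0).1‖ := norm_pos_iff.mpr (hne 0 (mem_ball_self hr))
  have hderiv : HasDerivAt (fun z => ((f z).1)⁻¹) (-(deriv f 0).1 / (f 0).1 ^ 2) 0 :=
    (hf.differentiableAt (ball_mem_nhds 0 hr)).hasDerivAt.fst.inv (hne 0 (mem_ball_self hr))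
  have hcauchy := norm_deriv_le_of_forall_norm_le (f := fun z => ((f z).1)⁻¹) hr
    (hf.fst.inv hne) fun z hz => by
      rw [norm_inv]; exact inv_anti₀ hε (hmaps hz).2.le
  rw [hderiv.deriv, norm_div, norm_neg, norm_pow, div_le_div_iff₀ (by positivity) hr] at hcauchy
  field_simp at hcauchy
  linarith

/-- Cauchy estimate for `f₂ / f₁`, which is bounded by `1`. -/
theorem norm_deriv_snd_mul_sub_le :
    r * ‖(deriv f 0).2 * (f 0).1 - (f 0).2 * (deriv f 0).1‖ ≤ 2 * ‖(f 0).1‖ ^ 2 := by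
  have hne z (hz : z ∈ ball 0 r) : (f z).1 ≠ 0 := fst_ne_zero hε (hmaps hz)
  have hq : 0 < ‖(f 0).1‖ := norm_pos_iff.mpr (hne 0 (mem_ball_self hr))
  have hF := (hf.differentiableAt (ball_mem_nhds 0 hr)).hasDerivAt
  have hderiv : HasDerivAt (fun z => (f z).2 / (f z).1)
      (((deriv f 0).2 * (f 0).1 - (f 0).2 * (deriv f 0).1) / (f 0).1 ^ 2) 0 :=
    hF.snd.div hF.fst (hne 0 (mem_ball_self hr))
  have hcauchy := norm_deriv_le_of_forall_norm_le (f := fun z => (f z).2 / (f z).1) (B := 1) hr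
    (hf.snd.div hf.fst hne) fun z hz => by
      rw [norm_div, div_le_one (norm_pos_iff.mpr (hne z hz))]; exact (hmaps hz).1.le
  rw [hderiv.deriv, norm_div, norm_pow, div_le_div_iff₀ (by positivity) hr] at hcauchy
  linarith

theorem norm_deriv_le : ε * r * ‖deriv f 0‖ ≤ 2 * (ε + ‖(f 0).1‖) ^ 2 := by
  have hq : f 0 ∈ truncatedCone ε := hmaps (mem_ball_self hr)
  have hfst := norm_deriv_fst_le hε hr hf hmaps
  have hsnd := norm_deriv_snd_mul_sub_le hε hr hf hmaps
  set v := deriv f 0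
  set q := f 0
  set a := ‖q.1‖
  have ha : 0 < a := hε.trans hq.2
  have hv₂ : a * (ε * r * ‖v.2‖) ≤ a * (2 * (ε + a) ^ 2) :=
    calc a * (ε * r * ‖v.2‖) = ε * r * ‖(v.2 * q.1 - q.2 * v.1) + q.2 * v.1‖ := by
          rw [sub_add_cancel, norm_mul]; ring
      _ ≤ ε * r * (‖v.2 * q.1 - q.2 * v.1‖ + ‖q.2 * v.1‖) := by gcongr; exact norm_add_le _ _
      _ = ε * (r * ‖v.2 * q.1 - q.2 * v.1‖) + ‖q.2‖ * (ε * r * ‖v.1‖) := by rw [norm_mul]; ring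
      _ ≤ ε * (2 * a ^ 2) + a * (2 * a ^ 2) := by gcongr; exact hq.1.le
      _ ≤ a * (2 * (ε + a) ^ 2) := by nlinarith [mul_pos (mul_pos ha hε) (add_pos ha hε)]
  rw [Prod.norm_def, mul_max_of_nonneg _ _ (by positivity), max_le_iff]
  exact ⟨by nlinarith, le_of_mul_le_mul_left hv₂ ha⟩

end truncatedCone

/-- For every ε > 0, the domain Ω_ε = {(z,w) : |w| < |z|, |z| > ε} ⊂ ℂ² is
Kobayashi hyperbolic. -/
theorem stmt_2 (ε : ℝ) (hε : 0 < ε) :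
    KobayashiHyperbolic
      {p : ℂ × ℂ | ‖p.2‖ < ‖p.1‖ ∧ ε < ‖p.1‖} := by
  refine kobayashiHyperbolic_of_lowerSemicontinuousOn (Ω := truncatedCone ε)
    (ρ := fun q => ε / (2 * (ε + ‖q.1‖) ^ 2))
    (continuous_const.div (by fun_prop) fun q => by positivity).continuousOn.lowerSemicontinuousOn
    (fun q _ => by positivity) fun q hq v => le_kob truncatedCone.isOpen hq v ?_
  intro r hr f hf hf0 hdf hmaps
  subst hf0 hdf
  have hbound := truncatedCone.norm_deriv_le hε hr hf hmaps
  rw [div_mul_eq_mul_div, div_le_div_iff₀ (by positivity) hr]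
  linarith
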